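/- Let G be a finite group, H ≤ G, and let u_H ∈ B(H) ⊗ ℚ be the primitive idempotent of the rational Burnside ring supported at H (i.e. with mark 1 at H and mark 0 at all other subgroups of H). Set u^G_H := Ind^G_H(u_H) ∈ B(G) ⊗ ℚ. Then u^G_H · u^G_H = |N_G(H)/H| · u^G_H. -/

import Mathlib

open Pointwise Finsupp

noncomputable section

/-- Conjugacy classes of subgroups of `G`. -/
def SubgroupConj (G : Type*) [Group G] : Type _ :=
  Quotient (MulAction.orbitRel (ConjAct G) (Subgroup G))

variable {G : Type*} [Group G]

/-- The conjugacy class of a subgroup. -/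
def Subgroup.toConj (K : Subgroup G) : SubgroupConj G :=
  Quotient.mk (MulAction.orbitRel (ConjAct G) (Subgroup G)) K

/-- A representative of a conjugacy class of subgroups. -/
def SubgroupConj.rep (c : SubgroupConj G) : Subgroup G := Quotient.out c

instance : DecidableEq (SubgroupConj G) := Classical.decEq _

instance [Finite G] : Finite (Subgroup G) :=
  Finite.of_injective (fun H => (H : Set G)) fun _ _ h => SetLike.ext' h

instance [Finite G] : Finite (SubgroupConj G) := Quotient.finite _

noncomputable instance [Finite G] : Fintype (SubgroupConj G) := Fintype.ofFinite _

instance [Finite G] (s t : Set G) : Finite (DoubleCoset.Quotient s t) :=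
  Quotient.finite _

noncomputable instance [Finite G] (s t : Set G) : Fintype (DoubleCoset.Quotient s t) :=
  Fintype.ofFinite _

/-- The conjugate subgroup `g K g⁻¹`. -/
def conjSub (g : G) (K : Subgroup G) : Subgroup G :=
  Subgroup.map (MulAut.conj g).toMonoidHom K

/-- The rational Burnside ring of `G`, as the free `ℚ`-module on the classes `[G/Γ]`. -/
abbrev BQ (G : Type*) [Group G] := SubgroupConj G →₀ ℚ

variable [Finite G]

/-- The double coset formula for the product of two basis elements
`⟨Γ⟩⟨Γ'⟩ = Σ_{g ∈ Γ'\G\Γ} ⟨Γ ∩ g⁻¹ Γ' g⟩`. -/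
def basisMul (c d : SubgroupConj G) : BQ G :=
  ∑ q : DoubleCoset.Quotient (d.rep : Set G) (c.rep : Set G),
    Finsupp.single (Subgroup.toConj (c.rep ⊓ conjSub (Quotient.out q)⁻¹ d.rep)) 1

/-- The multiplication of the Burnside ring in the basis `[G/Γ]`. -/
def mulB (x y : BQ G) : BQ G :=
  x.sum fun c a => y.sum fun d b => (a * b) • basisMul c d

/-- The unit `[G/G]` of the Burnside ring. -/
def oneB : BQ G := Finsupp.single (Subgroup.toConj (⊤ : Subgroup G)) 1

/-- Induction along an (injective) group homomorphism. -/
def indF {H : Type*} [Group H] (f : H →* G) (y : BQ H) : BQ G :=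
  y.sum fun c a => Finsupp.single (Subgroup.toConj (c.rep.map f)) a

/-- Restriction of the basis element `[G/Γ]` along `f : H →* G`:
`Res [G/Γ] = Σ_{g ∈ f(H)\G/Γ} [H / f⁻¹(g Γ g⁻¹)]`. -/
def resBasis {H : Type*} [Group H] (f : H →* G) (c : SubgroupConj G) : BQ H :=
  ∑ q : DoubleCoset.Quotient (f.range : Set G) (c.rep : Set G),
    Finsupp.single (Subgroup.toConj ((conjSub (Quotient.out q) c.rep).comap f)) 1

/-- Restriction along a group homomorphism. -/
def resF {H : Type*} [Group H] (f : H →* G) (x : BQ G) : BQ H :=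
  x.sum fun c a => a • resBasis f c

/-- The mark of the basis element `[G/Γ]` at (the class of) `Δ`: the number of
`Δ`-fixed points of `G/Γ`. -/
def markBasis (c d : SubgroupConj G) : ℚ :=
  (Nat.card {x : G ⧸ c.rep // ∀ k ∈ d.rep, k • x = x} : ℚ)

/-- The mark homomorphism, in the basis `[G/Γ]`. -/
def markMap (x : BQ G) : SubgroupConj G → ℚ :=
  fun d => x.sum fun c a => a * markBasis c d

/-- `x` is the primitive idempotent of `B(G) ⊗ ℚ` supported at the full subgroup:
its mark at `G` is `1` and its marks at all proper subgroups vanish. -/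
def IsTopIdem (x : BQ G) : Prop :=
  markMap x = fun d => if d = Subgroup.toConj (⊤ : Subgroup G) then 1 else 0

/-- `|N_G(H)/H|`. -/
def nuG (H : Subgroup G) : ℕ :=
  Nat.card ((Subgroup.normalizer (H : Set G)) ⧸ H.subgroupOf (Subgroup.normalizer (H : Set G)))


/-- The conjugation isomorphism `H → gHg⁻¹`, as a monoid homomorphism. -/
def conjHom (g : G) (H : Subgroup G) : ↥H →* ↥(conjSub g H) :=
  ((MulAut.conj g).toMonoidHom.comp H.subtype).codRestrict (conjSub g H)
    (fun h => Subgroup.mem_map_of_mem _ h.2)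

/-- Conjugation by an element of the normalizer of `H`, as an endomorphism of `H`. -/
def normConjHom (H : Subgroup G) (n : G) (hn : n ∈ Subgroup.normalizer (H : Set G)) : ↥H →* ↥H :=
  ((MulAut.conj n).toMonoidHom.comp H.subtype).codRestrict H
    (fun h => by simpa using (Subgroup.mem_normalizer_iff.mp hn ↑h).mp h.2)


/-!
The mark homomorphism `x ↦ (|x^Δ|)_Δ` is an injective ring homomorphism out of `B(G) ⊗ ℚ`:
it is multiplicative because `G/Γ × G/Γ'` splits into the orbits `G/(Γ ∩ g⁻¹Γ'g)`, one for
each double coset `Γ'gΓ`, and injective because the table of marks is triangular. So it suffices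
to compare marks. For `K ≤ H` the `Δ`-fixed points of `G/K` fibre over those of `G/H`, the fibre
over `gH` being the `(H ∩ g⁻¹Δg)`-fixed points of `H/K`. Hence the mark of `Ind u_H` at `Δ` counts
the cosets `gH` with `gHg⁻¹ = Δ`. These are either none or a single free orbit of `N_G(H)/H`, so
their number `t` satisfies `t² = |N_G(H)/H| · t`.
-/

section Conjugation

variable {G : Type*} [Group G]

lemma conjSub_eq_smul (g : G) (K : Subgroup G) : conjSub g K = MulAut.conj g • K := rfl

lemma mem_conjSub {g a : G} {K : Subgroup G} : a ∈ conjSub g K ↔ g⁻¹ * a * g ∈ K := by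
  simp [conjSub_eq_smul, Subgroup.mem_pointwise_smul_iff_inv_smul_mem, MulAut.smul_def]

lemma conjSub_one (K : Subgroup G) : conjSub 1 K = K := by
  simp [conjSub_eq_smul]

lemma conjSub_mul (g h : G) (K : Subgroup G) :
    conjSub (g * h) K = conjSub g (conjSub h K) := by
  simp [conjSub_eq_smul, mul_smul]

lemma conjSub_le_iff {g : G} {K L : Subgroup G} : conjSub g K ≤ L ↔ K ≤ conjSub g⁻¹ L := by
  simp [conjSub_eq_smul, Subgroup.pointwise_smul_subset_iff]

lemma conjSub_top (g : G) : conjSub g ⊤ = ⊤ := by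
  ext; simp [mem_conjSub]

lemma conjSub_of_mem {g : G} {K : Subgroup G} (hg : g ∈ K) : conjSub g K = K :=
  Subgroup.conj_smul_eq_self_of_mem hg

lemma conjSub_eq_self_iff {g : G} {K : Subgroup G} :
    conjSub g K = K ↔ g ∈ Subgroup.normalizer (K : Set G) :=
  Subgroup.mem_normalizer_iff_map_conj_eq.symm

lemma card_conjSub (g : G) (K : Subgroup G) : Nat.card (conjSub g K) = Nat.card K :=
  Nat.card_congr (Subgroup.equivSMul (MulAut.conj g) K).toEquiv.symm

lemma map_subtype_conjSub {H : Subgroup G} (h : H) (K : Subgroup H) :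
    (conjSub h K).map H.subtype = conjSub (h : G) (K.map H.subtype) := by
  simp only [conjSub, Subgroup.map_map]
  rfl

lemma toConj_eq_toConj_iff {K L : Subgroup G} :
    Subgroup.toConj K = Subgroup.toConj L ↔ ∃ g : G, conjSub g L = K :=
  Quotient.eq.trans MulAction.orbitRel_apply

lemma toConj_conjSub (g : G) (K : Subgroup G) :
    Subgroup.toConj (conjSub g K) = Subgroup.toConj K :=
  toConj_eq_toConj_iff.mpr ⟨g, rfl⟩

lemma toConj_rep (c : SubgroupConj G) : Subgroup.toConj c.rep = c := Quotient.out_eq c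

lemma exists_conjSub_eq_rep (K : Subgroup G) : ∃ g : G, conjSub g K = (Subgroup.toConj K).rep :=
  toConj_eq_toConj_iff.mp (toConj_rep _)

lemma toConj_eq_toConj_top_iff {K : Subgroup G} :
    Subgroup.toConj K = Subgroup.toConj ⊤ ↔ K = ⊤ := by
  simp [toConj_eq_toConj_iff, conjSub_top, eq_comm]

end Conjugation

section FixedPoints

variable {G : Type*} [Group G]

abbrev Fixed (Δ : Subgroup G) (α : Type*) [MulAction G α] : Type _ :=
  {x : α // ∀ k ∈ Δ, k • x = x}

variable {α β : Type*} [MulAction G α] [MulAction G β] (Δ : Subgroup G)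

instance [Finite α] : Fintype (Fixed Δ α) := Fintype.ofFinite _

def Fixed.map (f : α → β) (hf : ∀ (k : G) x, f (k • x) = k • f x) :
    Fixed Δ α → Fixed Δ β :=
  fun x => ⟨f x.1, fun k hk => by rw [← hf, x.2 k hk]⟩

def Fixed.equivOfEquivariant (e : α ≃ β) (he : ∀ (k : G) x, e (k • x) = k • e x) :
    Fixed Δ α ≃ Fixed Δ β :=
  e.subtypeEquiv fun x => forall₂_congr fun k _ => by rw [← he, e.apply_eq_iff_eq]

def Fixed.prodEquiv : Fixed Δ (α × β) ≃ Fixed Δ α × Fixed Δ β :=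
  (Equiv.subtypeEquivRight fun p => by simp only [Prod.ext_iff, Prod.smul_fst, Prod.smul_snd,
    forall_and]).trans Equiv.subtypeProdEquivProd

def Fixed.sigmaEquiv {ι : Type*} (α : ι → Type*) [∀ i, MulAction G (α i)] :
    Fixed Δ (Σ i, α i) ≃ Σ i, Fixed Δ (α i) where
  toFun | ⟨⟨i, x⟩, hx⟩ => ⟨i, x, fun k hk => sigma_mk_injective (hx k hk)⟩
  invFun | ⟨i, x, hx⟩ => ⟨⟨i, x⟩, fun k hk => by rw [Sigma.smul_mk, hx k hk]⟩
  left_inv | ⟨⟨_, _⟩, _⟩ => rfl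
  right_inv | ⟨_, _, _⟩ => rfl

def Fixed.conjSubEquiv (g : G) : Fixed Δ α ≃ Fixed (conjSub g Δ) α :=
  (MulAction.toPerm g).subtypeEquiv fun x => by
    simp [conjSub, mul_smul, smul_left_cancel_iff]

lemma fixed_mk_iff_le_conjSub {Δ Γ : Subgroup G} {a : G} :
    (∀ k ∈ Δ, k • (a : G ⧸ Γ) = a) ↔ Δ ≤ conjSub a Γ := by
  simp only [SetLike.le_def, mem_conjSub, MulAction.Quotient.smul_mk, smul_eq_mul,
    QuotientGroup.eq]
  refine forall₂_congr fun k _ => ?_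
  rw [← Γ.inv_mem_iff]
  group

lemma fixed_iff_le_conjSub_out {Δ Γ : Subgroup G} {y : G ⧸ Γ} :
    (∀ k ∈ Δ, k • y = y) ↔ Δ ≤ conjSub y.out Γ := by
  conv_lhs => rw [← QuotientGroup.out_eq' y]
  exact fixed_mk_iff_le_conjSub

lemma quotientMapOfLE_smul {Γ Γ' : Subgroup G} (h : Γ ≤ Γ') (k : G) (x : G ⧸ Γ) :
    Subgroup.quotientMapOfLE h (k • x) = k • Subgroup.quotientMapOfLE h x := by
  induction x using QuotientGroup.induction_on with
  | H a => rfl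

def quotientConjSubEquiv (g : G) (Γ : Subgroup G) : G ⧸ Γ ≃ G ⧸ conjSub g Γ where
  toFun := Quotient.map' (· * g⁻¹) fun a b h => by
    rw [QuotientGroup.leftRel_apply, mem_conjSub] at *
    simpa [mul_assoc] using h
  invFun := Quotient.map' (· * g) fun a b h => by
    rw [QuotientGroup.leftRel_apply, mem_conjSub] at *
    simpa [mul_assoc] using h
  left_inv := Quotient.ind' fun a => by simp [Quotient.map'_mk'']
  right_inv := Quotient.ind' fun a => by simp [Quotient.map'_mk'']

lemma quotientConjSubEquiv_smul (g : G) (Γ : Subgroup G) (k : G) (x : G ⧸ Γ) :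
    quotientConjSubEquiv g Γ (k • x) = k • quotientConjSubEquiv g Γ x := by
  induction x using QuotientGroup.induction_on with
  | H a => simp [quotientConjSubEquiv, Quotient.map'_mk'', mul_assoc]

lemma card_fixed_quotient_conjSub (g : G) (Γ : Subgroup G) :
    Nat.card (Fixed Δ (G ⧸ conjSub g Γ)) = Nat.card (Fixed Δ (G ⧸ Γ)) :=
  Nat.card_congr (Fixed.equivOfEquivariant Δ _ (quotientConjSubEquiv_smul g Γ)).symm

lemma markBasis_toConj (Γ : Subgroup G) (d : SubgroupConj G) :
    markBasis (Subgroup.toConj Γ) d = Nat.card (Fixed d.rep (G ⧸ Γ)) := by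
  obtain ⟨g, hg⟩ := exists_conjSub_eq_rep Γ
  change (Nat.card (Fixed d.rep (G ⧸ (Subgroup.toConj Γ).rep)) : ℚ) = _
  rw [← hg, card_fixed_quotient_conjSub]

lemma markBasis_toConj_right (c : SubgroupConj G) (Δ : Subgroup G) :
    markBasis c (Subgroup.toConj Δ) = Nat.card (Fixed Δ (G ⧸ c.rep)) := by
  obtain ⟨g, hg⟩ := exists_conjSub_eq_rep Δ
  rw [markBasis, ← hg, ← Nat.card_congr (Fixed.conjSubEquiv Δ g)]

end FixedPoints

section DoubleCosets

variable {G : Type*} [Group G] (Γ Γ' : Subgroup G)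

def doubleCosetToProd :
    (Σ q : DoubleCoset.Quotient (Γ' : Set G) Γ,
      G ⧸ (Γ ⊓ conjSub (Quotient.out q)⁻¹ Γ')) → (G ⧸ Γ) × (G ⧸ Γ') :=
  fun w => (Subgroup.quotientMapOfLE inf_le_left w.2,
    Quotient.map' (· * (Quotient.out w.1)⁻¹) (fun a b h => by
      rw [QuotientGroup.leftRel_apply, Subgroup.mem_inf, mem_conjSub] at *
      simpa [mul_assoc] using h.2) w.2)

lemma doubleCosetToProd_mk (q : DoubleCoset.Quotient (Γ' : Set G) Γ) (a : G) :
    doubleCosetToProd Γ Γ' ⟨q, a⟩ =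
      ((a : G ⧸ Γ), ((a * (Quotient.out q)⁻¹ : G) : G ⧸ Γ')) :=
  rfl

lemma doubleCosetToProd_smul (k : G) (w) :
    doubleCosetToProd Γ Γ' (k • w) = k • doubleCosetToProd Γ Γ' w := by
  obtain ⟨q, x⟩ := w
  induction x using QuotientGroup.induction_on with
  | H a => simp [Sigma.smul_mk, doubleCosetToProd_mk, mul_assoc]

lemma doubleCosetToProd_injective : Function.Injective (doubleCosetToProd Γ Γ') := by
  rintro ⟨q, x⟩ ⟨q', x'⟩ h
  induction x using QuotientGroup.induction_on with | H a => ?_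
  induction x' using QuotientGroup.induction_on with | H b => ?_
  rw [doubleCosetToProd_mk, doubleCosetToProd_mk, Prod.mk.injEq, QuotientGroup.eq,
    QuotientGroup.eq] at h
  obtain ⟨hΓ, hΓ'⟩ := h
  obtain rfl : q' = q := by
    have := (DoubleCoset.eq Γ' Γ (Quotient.out q') (Quotient.out q)).mpr
      ⟨_, hΓ', _, Γ.inv_mem hΓ, by group⟩
    rwa [DoubleCoset.out_eq', DoubleCoset.out_eq'] at this
  refine congrArg (Sigma.mk _) (QuotientGroup.eq.mpr (Subgroup.mem_inf.mpr ⟨hΓ, ?_⟩))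
  rw [mem_conjSub]
  simpa [mul_assoc] using hΓ'

lemma doubleCosetToProd_surjective : Function.Surjective (doubleCosetToProd Γ Γ') := by
  rintro ⟨x, y⟩
  induction x using QuotientGroup.induction_on with | H a => ?_
  induction y using QuotientGroup.induction_on with | H b => ?_
  obtain ⟨h, k, hh, hk, hout⟩ := DoubleCoset.mk_out_eq_mul Γ' Γ (b⁻¹ * a)
  refine ⟨⟨DoubleCoset.mk Γ' Γ (b⁻¹ * a), (a * k : G)⟩, ?_⟩
  rw [doubleCosetToProd_mk, hout, Prod.mk.injEq, QuotientGroup.eq, QuotientGroup.eq]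
  constructor
  · simpa using hk
  · convert hh using 1
    group

def doubleCosetEquivProd :
    (Σ q : DoubleCoset.Quotient (Γ' : Set G) Γ,
      G ⧸ (Γ ⊓ conjSub (Quotient.out q)⁻¹ Γ')) ≃ (G ⧸ Γ) × (G ⧸ Γ') :=
  Equiv.ofBijective _ ⟨doubleCosetToProd_injective Γ Γ', doubleCosetToProd_surjective Γ Γ'⟩

lemma card_fixed_quotient_mul_card_fixed_quotient [Finite G] (Δ : Subgroup G) :
    Nat.card (Fixed Δ (G ⧸ Γ)) * Nat.card (Fixed Δ (G ⧸ Γ')) =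
      ∑ q : DoubleCoset.Quotient (Γ' : Set G) Γ,
        Nat.card (Fixed Δ (G ⧸ (Γ ⊓ conjSub (Quotient.out q)⁻¹ Γ'))) := by
  rw [← Nat.card_prod, ← Nat.card_sigma]
  exact Nat.card_congr ((Fixed.sigmaEquiv Δ _).symm.trans <|
    (Fixed.equivOfEquivariant Δ (doubleCosetEquivProd Γ Γ')
      (doubleCosetToProd_smul Γ Γ')).trans (Fixed.prodEquiv Δ)).symm

end DoubleCosets

section Marks

variable {G : Type*} [Group G]

lemma markMap_eq_linearCombination (x : BQ G) :
    markMap x = Finsupp.linearCombination ℚ markBasis x := by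
  ext d
  simp [markMap, Finsupp.linearCombination_apply, Finsupp.sum, Finset.sum_apply]

lemma markMap_smul (a : ℚ) (x : BQ G) : markMap (a • x) = a • markMap x := by
  simp only [markMap_eq_linearCombination, map_smul]

lemma markMap_sub (x y : BQ G) : markMap (x - y) = markMap x - markMap y := by
  simp only [markMap_eq_linearCombination, map_sub]

variable [Finite G]

lemma markMap_basisMul (c c' : SubgroupConj G) :
    markMap (basisMul c c') = markBasis c * markBasis c' := by
  ext d
  simp only [markMap_eq_linearCombination, basisMul, map_sum, Finsupp.linearCombination_single,
    one_smul, Finset.sum_apply, markBasis_toConj, Pi.mul_apply]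
  rw [markBasis, markBasis, ← Nat.cast_mul, card_fixed_quotient_mul_card_fixed_quotient,
    Nat.cast_sum]

lemma markMap_mulB (x y : BQ G) : markMap (mulB x y) = markMap x * markMap y := by
  rw [markMap_eq_linearCombination, mulB]
  simp_rw [map_finsuppSum, map_smul, ← markMap_eq_linearCombination, markMap_basisMul]
  rw [markMap_eq_linearCombination x, markMap_eq_linearCombination y,
    Finsupp.linearCombination_apply, Finsupp.linearCombination_apply, Finsupp.sum_mul]
  simp_rw [Finsupp.mul_sum, smul_mul_smul_comm]

lemma markBasis_self_ne_zero (c : SubgroupConj G) : markBasis c c ≠ 0 := by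
  have : Nonempty (Fixed c.rep (G ⧸ c.rep)) :=
    ⟨⟨(1 : G), fixed_mk_iff_le_conjSub.mpr (by rw [conjSub_one])⟩⟩
  exact Nat.cast_ne_zero.mpr Nat.card_pos.ne'

lemma eq_of_markBasis_ne_zero {c c' : SubgroupConj G} (h : markBasis c' c ≠ 0)
    (hcard : Nat.card c'.rep ≤ Nat.card c.rep) : c' = c := by
  obtain ⟨⟨x, hx⟩⟩ := (Nat.card_ne_zero.mp (Nat.cast_ne_zero.mp h)).1
  induction x using QuotientGroup.induction_on with | H a => ?_
  have heq : c.rep = conjSub a c'.rep :=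
    Subgroup.eq_of_le_of_card_ge (fixed_mk_iff_le_conjSub.mp hx) (by rwa [card_conjSub])
  rw [← toConj_rep c, ← toConj_rep c', heq, toConj_conjSub]

/-- Triangularity: at a class of maximal order in the support of `x`, only that class itself
contributes to the mark. -/
lemma eq_zero_of_markMap_eq_zero {x : BQ G} (hx : markMap x = 0) : x = 0 := by
  by_contra hne
  obtain ⟨c, hc, hmax⟩ := x.support.exists_max_image (fun c => Nat.card c.rep)
    (Finsupp.support_nonempty_iff.mpr hne)
  have hxc : markMap x c = x c * markBasis c c := by
    refine Finset.sum_eq_single_of_mem c hc fun c' hc' hc'c => ?_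
    have : markBasis c' c = 0 := by
      by_contra h
      exact hc'c (eq_of_markBasis_ne_zero h (hmax c' hc'))
    simp [this]
  have := congrFun hx c
  rw [hxc, Pi.zero_apply] at this
  exact mul_ne_zero (Finsupp.mem_support_iff.mp hc) (markBasis_self_ne_zero c) this

lemma markMap_injective : Function.Injective (markMap (G := G)) := fun x y h =>
  sub_eq_zero.mp (eq_zero_of_markMap_eq_zero (by rw [markMap_sub, h, sub_self]))

end Marks

section Induction

variable {G : Type*} [Group G] {H : Subgroup G} (K : Subgroup H)

def translatedInclusion (g : G) : H ⧸ K → G ⧸ K.map H.subtype :=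
  Quotient.map' (fun h => g * h) fun h h' hr => by
    rw [QuotientGroup.leftRel_apply] at hr ⊢
    convert Subgroup.mem_map_of_mem H.subtype hr using 1
    simp [mul_assoc]

lemma translatedInclusion_mk (g : G) (h : H) :
    translatedInclusion K g h = ((g * h : G) : G ⧸ K.map H.subtype) :=
  rfl

lemma translatedInclusion_injective (g : G) : Function.Injective (translatedInclusion K g) := by
  intro z z' hzz'
  induction z using QuotientGroup.induction_on with | H h => ?_
  induction z' using QuotientGroup.induction_on with | H h' => ?_
  rw [translatedInclusion_mk, translatedInclusion_mk, QuotientGroup.eq] at hzz'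
  rw [QuotientGroup.eq, ← Subgroup.mem_map_iff_mem H.subtype_injective]
  simpa [mul_assoc] using hzz'

lemma quotientMapOfLE_translatedInclusion (g : G) (z : H ⧸ K) :
    Subgroup.quotientMapOfLE (Subgroup.map_subtype_le K) (translatedInclusion K g z) = g := by
  induction z using QuotientGroup.induction_on with
  | H h => simp [translatedInclusion_mk]

lemma exists_translatedInclusion_eq {g : G} {x : G ⧸ K.map H.subtype}
    (hx : Subgroup.quotientMapOfLE (Subgroup.map_subtype_le K) x = g) :
    ∃ z, translatedInclusion K g z = x := by
  induction x using QuotientGroup.induction_on with | H a => ?_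
  rw [Subgroup.quotientMapOfLE_apply_mk, QuotientGroup.eq] at hx
  exact ⟨((⟨a⁻¹ * g, hx⟩⁻¹ : H) : H ⧸ K), by simp [translatedInclusion_mk]⟩

lemma fixed_translatedInclusion_iff {Δ : Subgroup G} {g : G} (hg : Δ ≤ conjSub g H)
    (z : H ⧸ K) :
    (∀ k ∈ (conjSub g⁻¹ Δ).subgroupOf H, k • z = z) ↔
      ∀ k ∈ Δ, k • translatedInclusion K g z = translatedInclusion K g z := by
  induction z using QuotientGroup.induction_on with | H h => ?_
  have hΔ : conjSub g⁻¹ Δ ≤ H := conjSub_le_iff.mpr (by rwa [inv_inv])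
  rw [translatedInclusion_mk, fixed_mk_iff_le_conjSub, fixed_mk_iff_le_conjSub,
    ← Subgroup.map_le_map_iff_of_injective H.subtype_injective, Subgroup.subgroupOf_map_subtype,
    inf_of_le_left hΔ, map_subtype_conjSub, conjSub_le_iff, inv_inv, conjSub_mul]

end Induction

section InducedMarks

variable {G : Type*} [Group G] {H : Subgroup G} (K : Subgroup H) (Δ : Subgroup G)

def fixedQuotientMap : Fixed Δ (G ⧸ K.map H.subtype) → Fixed Δ (G ⧸ H) :=
  Fixed.map Δ _ (quotientMapOfLE_smul (Subgroup.map_subtype_le K))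

lemma card_fiber_fixedQuotientMap (y : Fixed Δ (G ⧸ H)) :
    Nat.card {x // fixedQuotientMap K Δ x = y} =
      Nat.card (Fixed ((conjSub y.1.out⁻¹ Δ).subgroupOf H) (H ⧸ K)) := by
  have hy : Δ ≤ conjSub y.1.out H := fixed_iff_le_conjSub_out.mp y.2
  let f : Fixed ((conjSub y.1.out⁻¹ Δ).subgroupOf H) (H ⧸ K) →
      {x // fixedQuotientMap K Δ x = y} :=
    fun z => ⟨⟨translatedInclusion K _ z.1, (fixed_translatedInclusion_iff K hy z.1).mp z.2⟩,
      Subtype.ext ((quotientMapOfLE_translatedInclusion K _ z.1).trans (QuotientGroup.out_eq' _))⟩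
  refine (Nat.card_congr (Equiv.ofBijective f ⟨fun z z' h => ?_, fun x => ?_⟩)).symm
  · exact Subtype.ext (translatedInclusion_injective K _ (congrArg (·.1.1) h))
  · obtain ⟨⟨x, hx⟩, hxy⟩ := x
    obtain ⟨z, rfl⟩ := exists_translatedInclusion_eq K
      ((congrArg Subtype.val hxy).trans (QuotientGroup.out_eq' y.1).symm)
    exact ⟨⟨z, (fixed_translatedInclusion_iff K hy z).mpr hx⟩, rfl⟩

variable [Finite G]

lemma card_fixed_quotient_map_subtype :
    Nat.card (Fixed Δ (G ⧸ K.map H.subtype)) =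
      ∑ y : Fixed Δ (G ⧸ H),
        Nat.card (Fixed ((conjSub y.1.out⁻¹ Δ).subgroupOf H) (H ⧸ K)) := by
  rw [← Nat.card_congr (Equiv.sigmaFiberEquiv (fixedQuotientMap K Δ)), Nat.card_sigma]
  exact Finset.sum_congr rfl fun y _ => card_fiber_fixedQuotientMap K Δ y

lemma markMap_indF (x : BQ H) (d : SubgroupConj G) :
    markMap (indF H.subtype x) d =
      ∑ y : Fixed d.rep (G ⧸ H),
        markMap x (Subgroup.toConj ((conjSub y.1.out⁻¹ d.rep).subgroupOf H)) := by
  rw [markMap_eq_linearCombination, indF, map_finsuppSum]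
  simp only [Finsupp.linearCombination_single, Finsupp.sum, Finset.sum_apply, Pi.smul_apply,
    smul_eq_mul, markBasis_toConj, card_fixed_quotient_map_subtype, Nat.cast_sum, Finset.mul_sum]
  rw [Finset.sum_comm]
  simp only [markMap, Finsupp.sum, markBasis_toConj_right]

end InducedMarks

section Counting

variable {G : Type*} [Group G]

lemma conjSub_out_mk (H : Subgroup G) (g : G) : conjSub (g : G ⧸ H).out H = conjSub g H := by
  obtain ⟨h, hh⟩ := QuotientGroup.mk_out_eq_mul H g
  rw [hh, conjSub_mul, conjSub_of_mem h.2]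

lemma subgroupOf_conjSub_eq_top_iff {H Δ : Subgroup G} {g : G} (hg : Δ ≤ conjSub g H) :
    (conjSub g⁻¹ Δ).subgroupOf H = ⊤ ↔ conjSub g H = Δ := by
  rw [Subgroup.subgroupOf_eq_top, ← conjSub_le_iff]
  exact ⟨fun h => le_antisymm h hg, le_of_eq⟩

abbrev ConjugatingCosets (H Δ : Subgroup G) : Type _ := {y : G ⧸ H // conjSub y.out H = Δ}

lemma card_conjugatingCosets_of_conjSub_eq {H Δ : Subgroup G} {g₀ : G}
    (hg₀ : conjSub g₀ H = Δ) :
    Nat.card (ConjugatingCosets H Δ) = nuG H := by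
  let N := Subgroup.normalizer (H : Set G)
  let f : N ⧸ H.subgroupOf N → ConjugatingCosets H Δ :=
    Quotient.lift (fun n => ⟨(g₀ * n : G), by
      rw [conjSub_out_mk, conjSub_mul, conjSub_eq_self_iff.mpr n.2, hg₀]⟩) fun n n' h => by
      have h' := Subgroup.mem_subgroupOf.mp (QuotientGroup.leftRel_apply.mp h)
      exact Subtype.ext (QuotientGroup.eq.mpr (by simpa [mul_assoc] using h'))
  refine (Nat.card_congr (Equiv.ofBijective f ⟨fun q q' hqq' => ?_, fun y => ?_⟩)).symm
  · induction q using QuotientGroup.induction_on with | H n => ?_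
    induction q' using QuotientGroup.induction_on with | H n' => ?_
    have := QuotientGroup.eq.mp (congrArg Subtype.val hqq')
    rw [QuotientGroup.eq, Subgroup.mem_subgroupOf]
    simpa [mul_assoc] using this
  · have hn : g₀⁻¹ * y.1.out ∈ N := by
      rw [← conjSub_eq_self_iff, conjSub_mul, y.2, ← hg₀, ← conjSub_mul, inv_mul_cancel,
        conjSub_one]
    exact ⟨(⟨_, hn⟩ : N), Subtype.ext (by simp [f])⟩

lemma card_conjugatingCosets_mul_self (H Δ : Subgroup G) :
    Nat.card (ConjugatingCosets H Δ) * Nat.card (ConjugatingCosets H Δ) =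
      nuG H * Nat.card (ConjugatingCosets H Δ) := by
  rcases isEmpty_or_nonempty (ConjugatingCosets H Δ) with _ | ⟨⟨y₀, hy₀⟩⟩
  · simp
  · rw [card_conjugatingCosets_of_conjSub_eq hy₀]

lemma card_conjugatingCosets_eq_card_fixed (H Δ : Subgroup G) :
    Nat.card (ConjugatingCosets H Δ) =
      Nat.card {y : Fixed Δ (G ⧸ H) // (conjSub y.1.out⁻¹ Δ).subgroupOf H = ⊤} :=
  Nat.card_congr ((Equiv.subtypeSubtypeEquivSubtype (q := fun y : G ⧸ H => conjSub y.out H = Δ)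
    fun h => fixed_iff_le_conjSub_out.mpr h.ge).symm.trans
      (Equiv.subtypeEquivRight fun y =>
        subgroupOf_conjSub_eq_top_iff (fixed_iff_le_conjSub_out.mp y.2)).symm)

variable [Finite G]

lemma markMap_indF_of_isTopIdem {H : Subgroup G} {u : BQ H} (hu : IsTopIdem u)
    (d : SubgroupConj G) :
    markMap (indF H.subtype u) d = Nat.card (ConjugatingCosets H d.rep) := by
  rw [markMap_indF, show markMap u = _ from hu]
  classical
  simp only [toConj_eq_toConj_top_iff]
  rw [Finset.sum_boole, ← Fintype.card_subtype, ← Nat.card_eq_fintype_card,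
    card_conjugatingCosets_eq_card_fixed]

end Counting

/-- If `u_H` is the primitive idempotent of `B(H) ⊗ ℚ` supported at `H`, then
`u^G_H := Ind^G_H u_H` satisfies `u^G_H · u^G_H = |N_G(H)/H| · u^G_H`. -/
theorem induced_idempotent_almost_idempotent (G : Type*) [Group G] [Finite G]
    (H : Subgroup G) (u : BQ ↥H) (hu : IsTopIdem u) :
    mulB (indF H.subtype u) (indF H.subtype u) = (nuG H : ℚ) • indF H.subtype u := by
  refine markMap_injective (funext fun d => ?_)
  rw [markMap_mulB, markMap_smul, Pi.mul_apply, Pi.smul_apply, smul_eq_mul,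
    markMap_indF_of_isTopIdem hu]
  exact_mod_cast card_conjugatingCosets_mul_self H d.rep

end
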